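/- (Equality part of Theorem 1.) Let V be a finite set and let C₁, …, C_k be subsets of V with C₁ ∪ ⋯ ∪ C_k = V satisfying the running intersection property with separators S_i := C_i ∩ (C₁ ∪ ⋯ ∪ C_{i−1}), i = 2, …, k. Let n₁, n₂ > 0 be real numbers and let Σ̂, Σ̂⁽¹⁾, Σ̂⁽²⁾ be symmetric positive definite V×V matrices, each of whose inverse vanishes at every pair of distinct vertices not jointly contained in some C_i. For A ⊆ V nonempty define λ(A) := n₁ · log(det Σ̂_A / det Σ̂⁽¹⁾_A) + n₂ · log(det Σ̂_A / det Σ̂⁽²⁾_A), and λ(∅) := 0. Then λ(V) = λ(C₁) + ∑_{j=2}^{k} [λ(C_j) − λ(S_j)]. -/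

import Mathlib

open Matrix

/-- Principal sub-matrix of `M` indexed by the finset `A`. -/
def psub {V : Type*} [Fintype V] [DecidableEq V] (M : Matrix V V ℝ) (A : Finset V) :
    Matrix A A ℝ :=
  M.submatrix (fun a => a.1) (fun a => a.1)

/-- The log likelihood ratio criterion
`λ(A) = n₁ log(det Σ̂_A / det Σ̂⁽¹⁾_A) + n₂ log(det Σ̂_A / det Σ̂⁽²⁾_A)`.
For `A = ∅` all the determinants are `1` (empty matrices), so `λ(∅) = 0`. -/
noncomputable def lam {V : Type*} [Fintype V] [DecidableEq V]
    (n₁ n₂ : ℝ) (M M₁ M₂ : Matrix V V ℝ) (A : Finset V) : ℝ :=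
  n₁ * Real.log ((psub M A).det / (psub M₁ A).det) +
    n₂ * Real.log ((psub M A).det / (psub M₂ A).det)

/-!
Write `K = M⁻¹`. Jacobi's complementary-minor identity `det K · det M_A = det K_{Aᶜ}` (read off
from the block inverse) turns a decomposition `V = A ∪ B` in which `K` vanishes between `A \ B`
and `B \ A` into `det M · det M_{A ∩ B} = det M_A · det M_B`, because `K_{(A ∩ B)ᶜ}` is then block
diagonal. Splitting off the last clique is such a decomposition, with `A = C₁ ∪ ⋯ ∪ C_{k-1}` and
`A ∩ C_k = S_k`. The marginal `M_A` is again graphical for `C₁, …, C_{k-1}`: in the Schur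
complement formula `(M_A)⁻¹ = K_A - K_{A,Aᶜ} K_{Aᶜ}⁻¹ K_{Aᶜ,A}` the correction term only involves
vertices of `A` with a neighbour outside `A`, and these lie in `S_k ⊆ C_l`. By induction
`det M · ∏ det M_{S_j} = ∏ det M_{C_j}`, and `λ` is a linear combination of logarithms of such
determinants.
-/

open Finset

section SchurComplement

variable {m n α : Type*} [Fintype m] [Fintype n] [DecidableEq m] [DecidableEq n] [Field α]

theorem toBlocks₁₁_mul_schur_eq_one {M K : Matrix (m ⊕ n) (m ⊕ n) α} (hMK : M * K = 1)
    (hK : IsUnit K.toBlocks₂₂.det) :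
    M.toBlocks₁₁ * (K.toBlocks₁₁ - K.toBlocks₁₂ * K.toBlocks₂₂⁻¹ * K.toBlocks₂₁) = 1 := by
  rw [← fromBlocks_toBlocks M, ← fromBlocks_toBlocks K, fromBlocks_multiply,
    ← fromBlocks_one, fromBlocks_inj] at hMK
  obtain ⟨h₁₁, h₁₂, -, -⟩ := hMK
  have hM₁₂ : M.toBlocks₁₁ * K.toBlocks₁₂ * K.toBlocks₂₂⁻¹ = -M.toBlocks₁₂ := by
    rw [eq_neg_of_add_eq_zero_left h₁₂, Matrix.neg_mul, Matrix.mul_assoc, mul_nonsing_inv _ hK,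
      Matrix.mul_one]
  rw [Matrix.mul_sub, ← h₁₁, ← Matrix.mul_assoc, ← Matrix.mul_assoc, hM₁₂, Matrix.neg_mul,
    sub_neg_eq_add]

theorem det_mul_det_toBlocks₁₁ {M K : Matrix (m ⊕ n) (m ⊕ n) α} (hMK : M * K = 1)
    (hK : IsUnit K.toBlocks₂₂.det) : K.det * M.toBlocks₁₁.det = K.toBlocks₂₂.det := by
  have := invertibleOfIsUnitDet _ hK
  have hschur := congrArg det (toBlocks₁₁_mul_schur_eq_one hMK hK)
  rw [det_mul, det_one] at hschur
  have hdet : K.det = K.toBlocks₂₂.det *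
      (K.toBlocks₁₁ - K.toBlocks₁₂ * K.toBlocks₂₂⁻¹ * K.toBlocks₂₁).det := by
    conv_lhs => rw [← fromBlocks_toBlocks K]
    rw [det_fromBlocks₂₂, invOf_eq_nonsing_inv]
  rw [hdet]
  linear_combination K.toBlocks₂₂.det * hschur

end SchurComplement

section PrincipalSubmatrix

variable {V : Type*} [Fintype V] [DecidableEq V]

theorem det_submatrix_eq_det_psub (K : Matrix V V ℝ) {W : Type*} [Fintype W] [DecidableEq W]
    {f : W → V} (hf : Function.Injective f) {A : Finset V} (hA : Set.range f = A) :
    (K.submatrix f f).det = (psub K A).det := by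
  let e : W ≃ A := (Equiv.ofInjective f hf).trans (Equiv.setCongr hA)
  rw [← det_submatrix_equiv_self e (psub K A)]
  rfl

theorem det_psub_empty (K : Matrix V V ℝ) : (psub K ∅).det = 1 :=
  det_isEmpty

theorem det_psub_univ (K : Matrix V V ℝ) : (psub K univ).det = K.det := by
  rw [← det_submatrix_eq_det_psub K Function.injective_id (by simp), submatrix_id_id]

theorem det_psub_psub {K : Matrix V V ℝ} {T A : Finset V} (hA : A ⊆ T) :
    (psub (psub K T) (A.subtype (· ∈ T))).det = (psub K A).det :=
  det_submatrix_eq_det_psub K (f := fun x : A.subtype (· ∈ T) => x.1.1)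
    (fun x y h => Subtype.ext (Subtype.ext h)) (by ext v; simpa using @hA v)

theorem det_psub_union_of_offDiag_eq_zero {K : Matrix V V ℝ} {P Q : Finset V}
    (hPQ : Disjoint P Q) (h₁₂ : ∀ v ∈ P, ∀ w ∈ Q, K v w = 0)
    (h₂₁ : ∀ v ∈ Q, ∀ w ∈ P, K v w = 0) :
    (psub K (P ∪ Q)).det = (psub K P).det * (psub K Q).det := by
  rw [← det_submatrix_equiv_self (Equiv.Finset.union P Q hPQ), ← det_fromBlocks_zero₂₁ _ 0]
  congr 1
  ext (v | v) (w | w)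
  · rfl
  · exact h₁₂ v v.2 w w.2
  · exact h₂₁ v v.2 w w.2
  · rfl

variable {M : Matrix V V ℝ}

theorem Matrix.PosDef.psub (hM : M.PosDef) (A : Finset V) : (psub M A).PosDef :=
  hM.submatrix Subtype.val_injective

theorem psub_mul_schur_eq_one (hM : M.PosDef) (A : Finset V) :
    psub M A * (psub M⁻¹ A -
      (M⁻¹.submatrix (↑) (↑) : Matrix A {v // v ∉ A} ℝ) *
      (M⁻¹.submatrix (↑) (↑) : Matrix {v // v ∉ A} {v // v ∉ A} ℝ)⁻¹ *
      (M⁻¹.submatrix (↑) (↑) : Matrix {v // v ∉ A} A ℝ)) = 1 := by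
  let e := Equiv.sumCompl (· ∈ A)
  refine toBlocks₁₁_mul_schur_eq_one (M := M.submatrix e e) (K := M⁻¹.submatrix e e) ?_ ?_
  · rw [submatrix_mul_equiv, mul_nonsing_inv _ hM.det_pos.ne'.isUnit, submatrix_one_equiv]
  · exact (hM.inv.submatrix Subtype.val_injective).det_pos.ne'.isUnit

theorem det_inv_mul_det_psub (hM : M.PosDef) (A : Finset V) :
    M⁻¹.det * (psub M A).det = (psub M⁻¹ Aᶜ).det := by
  let e := Equiv.sumCompl (· ∈ A)
  have h := det_mul_det_toBlocks₁₁ (M := M.submatrix e e) (K := M⁻¹.submatrix e e)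
    (by rw [submatrix_mul_equiv, mul_nonsing_inv _ hM.det_pos.ne'.isUnit, submatrix_one_equiv])
    (hM.inv.submatrix Subtype.val_injective).det_pos.ne'.isUnit
  rw [det_submatrix_equiv_self] at h
  exact h.trans (det_submatrix_eq_det_psub M⁻¹ Subtype.val_injective (by ext; simp))

theorem inv_psub_apply_of_forall_notMem_left (hM : M.PosDef) {A : Finset V} (x y : A)
    (hx : ∀ a ∉ A, M⁻¹ x a = 0) : (psub M A)⁻¹ x y = M⁻¹ x y := by
  rw [inv_eq_right_inv (psub_mul_schur_eq_one hM A)]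
  have hcorr : ∀ N : Matrix {v // v ∉ A} A ℝ,
      (M⁻¹.submatrix (↑) (Subtype.val : {v // v ∉ A} → V) * N) x y = 0 := fun N =>
    sum_eq_zero fun a _ => by simp [hx a a.2]
  rw [Matrix.mul_assoc, Matrix.sub_apply, hcorr, sub_zero]
  rfl

theorem Matrix.PosDef.inv_apply_comm (hM : M.PosDef) (v w : V) : M⁻¹ v w = M⁻¹ w v := by
  simpa using (hM.inv.isHermitian.apply v w).symm

theorem inv_psub_apply_of_forall_notMem_right (hM : M.PosDef) {A : Finset V} (x y : A)
    (hy : ∀ a ∉ A, M⁻¹ y a = 0) : (psub M A)⁻¹ x y = M⁻¹ x y := by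
  rw [(hM.psub A).inv_apply_comm, inv_psub_apply_of_forall_notMem_left hM y x hy,
    hM.inv_apply_comm]

theorem det_mul_det_psub_inter (hM : M.PosDef) {A B : Finset V} (hAB : A ∪ B = univ)
    (hK : ∀ v ∈ A \ B, ∀ w ∈ B \ A, M⁻¹ v w = 0) :
    M.det * (psub M (A ∩ B)).det = (psub M A).det * (psub M B).det := by
  have hmem (v : V) : v ∈ A ∨ v ∈ B := mem_union.mp (hAB ▸ mem_univ v)
  have hAc : Aᶜ = B \ A := by ext v; have := hmem v; simp only [mem_compl, mem_sdiff]; tauto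
  have hBc : Bᶜ = A \ B := by ext v; have := hmem v; simp only [mem_compl, mem_sdiff]; tauto
  have hABc : (A ∩ B)ᶜ = A \ B ∪ B \ A := by
    ext v; have := hmem v; simp only [mem_compl, mem_inter, mem_union, mem_sdiff]; tauto
  have hA := det_inv_mul_det_psub hM A
  have hB := det_inv_mul_det_psub hM B
  have hI := det_inv_mul_det_psub hM (A ∩ B)
  have hK' : ∀ v ∈ B \ A, ∀ w ∈ A \ B, M⁻¹ v w = 0 := fun v hv w hw =>
    (hM.inv_apply_comm v w).trans (hK w hw v hv)
  rw [hABc, det_psub_union_of_offDiag_eq_zero disjoint_sdiff_sdiff hK hK', ← hBc, ← hAc, ← hA,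
    ← hB] at hI
  have hdet : M.det * M⁻¹.det = 1 := by
    rw [det_nonsing_inv, Ring.inverse_eq_inv, mul_inv_cancel₀ hM.det_pos.ne']
  linear_combination M.det ^ 2 * hI + ((psub M A).det * (psub M B).det * (M.det * M⁻¹.det + 1) -
    M.det * (psub M (A ∩ B)).det) * hdet

end PrincipalSubmatrix

section Decomposable

variable {V : Type*} [DecidableEq V] {k : ℕ}

def separator (C : Fin k → Finset V) (i : Fin k) : Finset V :=
  C i ∩ (Iio i).biUnion C

def HasRunningIntersection (C : Fin k → Finset V) : Prop :=
  ∀ i : Fin k, 0 < (i : ℕ) → ∃ l < i, separator C i ⊆ C l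

def VanishesOffCliques {ι α : Type*} [Zero α] (C : ι → Finset V) (K : Matrix V V α) : Prop :=
  ∀ v w, v ≠ w → (¬ ∃ i, v ∈ C i ∧ w ∈ C i) → K v w = 0

theorem separator_of_val_eq_zero (C : Fin k → Finset V) {i : Fin k} (hi : (i : ℕ) = 0) :
    separator C i = ∅ := by
  ext v
  simp [separator, Fin.lt_def, hi]

def initUnion (C : Fin (k + 1) → Finset V) : Finset V :=
  univ.biUnion fun i : Fin k => C i.castSucc

def initCliques (C : Fin (k + 1) → Finset V) (i : Fin k) : Finset (initUnion C) :=
  (C i.castSucc).subtype (· ∈ initUnion C)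

variable {C : Fin (k + 1) → Finset V}

theorem mem_initUnion {v : V} : v ∈ initUnion C ↔ ∃ i : Fin k, v ∈ C i.castSucc := by
  simp [initUnion]

theorem castSucc_subset_initUnion (i : Fin k) : C i.castSucc ⊆ initUnion C :=
  fun _ hv => mem_initUnion.mpr ⟨i, hv⟩

theorem separator_last : separator C (Fin.last k) = C (Fin.last k) ∩ initUnion C := by
  ext v
  simp [separator, initUnion, Fin.Iio_last_eq_map]

theorem separator_initCliques (i : Fin k) :
    separator (initCliques C) i = (separator C i.castSucc).subtype (· ∈ initUnion C) := by
  ext x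
  simp only [separator, initCliques, Fin.Iio_castSucc, mem_inter, mem_subtype, mem_biUnion,
    mem_map, Fin.coe_castSuccEmb, exists_exists_and_eq_and]

theorem biUnion_initCliques : univ.biUnion (initCliques C) = univ := by
  ext x
  simpa [initCliques] using mem_initUnion.mp x.2

theorem initUnion_union_last [Fintype V] (hcover : univ.biUnion C = univ) :
    initUnion C ∪ C (Fin.last k) = univ := by
  refine eq_univ_of_forall fun v => ?_
  obtain ⟨i, -, hvi⟩ := mem_biUnion.mp (hcover ▸ mem_univ v)
  rcases i.eq_castSucc_or_eq_last with ⟨j, rfl⟩ | rfl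
  · exact mem_union_left _ (castSucc_subset_initUnion j hvi)
  · exact mem_union_right _ hvi

theorem HasRunningIntersection.initCliques (hRIP : HasRunningIntersection C) :
    HasRunningIntersection (initCliques C) := by
  intro i hi
  obtain ⟨l, hlt, hsub⟩ := hRIP i.castSucc hi
  obtain ⟨l, rfl⟩ := Fin.exists_castSucc_eq.mpr (Fin.ne_last_of_lt hlt)
  refine ⟨l, Fin.castSucc_lt_castSucc_iff.mp hlt, ?_⟩
  rw [separator_initCliques]
  exact fun x hx => mem_subtype.mpr (hsub (mem_subtype.mp hx))

end Decomposable

section Factorization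

variable {V : Type*} [Fintype V] [DecidableEq V] {k : ℕ} {C : Fin (k + 1) → Finset V}
  {M : Matrix V V ℝ}

theorem det_mul_det_psub_separator_last (hM : M.PosDef) (hcover : univ.biUnion C = univ)
    (hC : VanishesOffCliques C M⁻¹) :
    M.det * (psub M (separator C (Fin.last k))).det =
      (psub M (initUnion C)).det * (psub M (C (Fin.last k))).det := by
  rw [separator_last, inter_comm]
  refine det_mul_det_psub_inter hM (initUnion_union_last hcover) fun v hv w hw => ?_
  rw [mem_sdiff] at hv hw
  refine hC v w (ne_of_mem_of_not_mem hv.1 hw.2) ?_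
  rintro ⟨i, hvi, hwi⟩
  rcases i.eq_castSucc_or_eq_last with ⟨j, rfl⟩ | rfl
  · exact hw.2 (castSucc_subset_initUnion j hwi)
  · exact hv.2 hvi

theorem VanishesOffCliques.inv_psub_initUnion (hM : M.PosDef)
    (hRIP : HasRunningIntersection C) (hC : VanishesOffCliques C M⁻¹) :
    VanishesOffCliques (initCliques C) (psub M (initUnion C))⁻¹ := by
  intro x y hxy hxy'
  obtain ⟨l, hl⟩ : ∃ l : Fin k, C (Fin.last k) ∩ initUnion C ⊆ C l.castSucc := by
    obtain ⟨i, -⟩ := mem_initUnion.mp x.2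
    obtain ⟨l, hlt, hsub⟩ := hRIP (Fin.last k) i.pos
    obtain ⟨l, rfl⟩ := Fin.exists_castSucc_eq.mpr (Fin.ne_last_of_lt hlt)
    rw [separator_last] at hsub
    exact ⟨l, hsub⟩
  have hnot : ¬ ((x : V) ∈ C l.castSucc ∧ (y : V) ∈ C l.castSucc) := fun h =>
    hxy' ⟨l, mem_subtype.mpr h.1, mem_subtype.mpr h.2⟩
  have hrow (z : initUnion C) : (∀ a ∉ initUnion C, M⁻¹ z a = 0) ∨ (z : V) ∈ C l.castSucc := by
    refine or_iff_not_imp_left.mpr fun hz => ?_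
    obtain ⟨a, ha, hza⟩ := not_forall₂.mp hz
    obtain ⟨i, hzi, hai⟩ : ∃ i, (z : V) ∈ C i ∧ a ∈ C i :=
      by_contra fun h => hza (hC z a (ne_of_mem_of_not_mem z.2 ha) h)
    rcases i.eq_castSucc_or_eq_last with ⟨j, rfl⟩ | rfl
    · exact absurd (castSucc_subset_initUnion j hai) ha
    · exact hl (mem_inter.mpr ⟨hzi, z.2⟩)
  have hK : M⁻¹ x y = 0 := by
    refine hC x y (Subtype.coe_injective.ne hxy) ?_
    rintro ⟨i, hxi, hyi⟩
    rcases i.eq_castSucc_or_eq_last with ⟨j, rfl⟩ | rfl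
    · exact hxy' ⟨j, mem_subtype.mpr hxi, mem_subtype.mpr hyi⟩
    · exact hnot ⟨hl (mem_inter.mpr ⟨hxi, x.2⟩), hl (mem_inter.mpr ⟨hyi, y.2⟩)⟩
  rcases hrow x with hx | hx
  · rw [inv_psub_apply_of_forall_notMem_left hM x y hx, hK]
  rcases hrow y with hy | hy
  · rw [inv_psub_apply_of_forall_notMem_right hM x y hy, hK]
  · exact absurd ⟨hx, hy⟩ hnot

end Factorization

theorem det_mul_prod_det_separator {k : ℕ} {V : Type*} [Fintype V] [DecidableEq V]
    {C : Fin k → Finset V} {M : Matrix V V ℝ} (hM : M.PosDef) (hcover : univ.biUnion C = univ)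
    (hRIP : HasRunningIntersection C) (hC : VanishesOffCliques C M⁻¹) :
    M.det * ∏ i, (psub M (separator C i)).det = ∏ i, (psub M (C i)).det := by
  induction k generalizing V with
  | zero =>
    have : IsEmpty V := ⟨fun v => by simpa using (hcover ▸ mem_univ v : v ∈ univ.biUnion C)⟩
    simp
  | succ k ih =>
    have hinit := ih (hM.psub (initUnion C)) biUnion_initCliques hRIP.initCliques
      (hC.inv_psub_initUnion hM hRIP)
    have hcl (i : Fin k) :
        (psub (psub M (initUnion C)) (initCliques C i)).det = (psub M (C i.castSucc)).det :=
      det_psub_psub (castSucc_subset_initUnion i)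
    have hsep (i : Fin k) : (psub (psub M (initUnion C)) (separator (initCliques C) i)).det =
        (psub M (separator C i.castSucc)).det := by
      rw [separator_initCliques]
      exact det_psub_psub (inter_subset_left.trans (castSucc_subset_initUnion i))
    simp only [hcl, hsep] at hinit
    rw [Fin.prod_univ_castSucc, Fin.prod_univ_castSucc]
    linear_combination (∏ i : Fin k, (psub M (separator C i.castSucc)).det) *
      det_mul_det_psub_separator_last hM hcover hC + (psub M (C (Fin.last k))).det * hinit

theorem log_det_eq_sum_sub {k : ℕ} {V : Type*} [Fintype V] [DecidableEq V]
    {C : Fin k → Finset V} {M : Matrix V V ℝ} (hM : M.PosDef) (hcover : univ.biUnion C = univ)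
    (hRIP : HasRunningIntersection C) (hC : VanishesOffCliques C M⁻¹) :
    Real.log M.det =
      ∑ i, (Real.log (psub M (C i)).det - Real.log (psub M (separator C i)).det) := by
  have hpos (A : Finset V) : (psub M A).det ≠ 0 := (hM.psub A).det_pos.ne'
  have h := congrArg Real.log (det_mul_prod_det_separator hM hcover hRIP hC)
  rw [Real.log_mul hM.det_pos.ne' (prod_ne_zero_iff.mpr fun i _ => hpos _),
    Real.log_prod fun i _ => hpos _, Real.log_prod fun i _ => hpos _] at h
  rw [sum_sub_distrib]
  linarith

theorem lam_eq_sub_log_det {V : Type*} [Fintype V] [DecidableEq V] {M M₁ M₂ : Matrix V V ℝ}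
    (hM : M.PosDef) (hM₁ : M₁.PosDef) (hM₂ : M₂.PosDef) (n₁ n₂ : ℝ) (A : Finset V) :
    lam n₁ n₂ M M₁ M₂ A =
      n₁ * (Real.log (psub M A).det - Real.log (psub M₁ A).det) +
        n₂ * (Real.log (psub M A).det - Real.log (psub M₂ A).det) := by
  rw [lam, Real.log_div (hM.psub A).det_pos.ne' (hM₁.psub A).det_pos.ne',
    Real.log_div (hM.psub A).det_pos.ne' (hM₂.psub A).det_pos.ne']

theorem lam_empty {V : Type*} [Fintype V] [DecidableEq V] (n₁ n₂ : ℝ) (M M₁ M₂ : Matrix V V ℝ) :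
    lam n₁ n₂ M M₁ M₂ ∅ = 0 := by
  simp [lam, det_psub_empty]

theorem stmt_2_general {V : Type*} [Fintype V] [DecidableEq V]
    (k : ℕ) (hk : 0 < k) (C : Fin k → Finset V)
    (hcover : Finset.univ.biUnion C = Finset.univ)
    (Sep : Fin k → Finset V)
    (hSep : ∀ i, Sep i = C i ∩ (Finset.Iio i).biUnion C)
    (hRIP : ∀ i : Fin k, (⟨0, hk⟩ : Fin k) < i → ∃ l < i, Sep i ⊆ C l)
    (n₁ n₂ : ℝ)
    (M M₁ M₂ : Matrix V V ℝ)
    (hM : M.PosDef) (hM₁ : M₁.PosDef) (hM₂ : M₂.PosDef)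
    (hzM : ∀ v w : V, v ≠ w → (¬ ∃ i, v ∈ C i ∧ w ∈ C i) → M⁻¹ v w = 0)
    (hzM₁ : ∀ v w : V, v ≠ w → (¬ ∃ i, v ∈ C i ∧ w ∈ C i) → M₁⁻¹ v w = 0)
    (hzM₂ : ∀ v w : V, v ≠ w → (¬ ∃ i, v ∈ C i ∧ w ∈ C i) → M₂⁻¹ v w = 0) :
    lam n₁ n₂ M M₁ M₂ Finset.univ =
      lam n₁ n₂ M M₁ M₂ (C ⟨0, hk⟩) +
        ∑ j ∈ Finset.univ.erase (⟨0, hk⟩ : Fin k),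
          (lam n₁ n₂ M M₁ M₂ (C j) - lam n₁ n₂ M M₁ M₂ (Sep j)) := by
  obtain rfl : Sep = separator C := funext hSep
  have hlog {N : Matrix V V ℝ} (hN : N.PosDef) (hzN : VanishesOffCliques C N⁻¹) :
      Real.log (psub N univ).det =
        ∑ i, (Real.log (psub N (C i)).det - Real.log (psub N (separator C i)).det) := by
    rw [det_psub_univ]
    exact log_det_eq_sum_sub hN hcover hRIP hzN
  calc lam n₁ n₂ M M₁ M₂ univ
      = ∑ j, (lam n₁ n₂ M M₁ M₂ (C j) - lam n₁ n₂ M M₁ M₂ (separator C j)) := by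
        simp only [lam_eq_sub_log_det hM hM₁ hM₂, hlog hM hzM, hlog hM₁ hzM₁, hlog hM₂ hzM₂,
          sum_sub_distrib, sum_add_distrib, ← mul_sum]
        ring
    _ = _ := by
        rw [← add_sum_erase _ _ (mem_univ ⟨0, hk⟩), separator_of_val_eq_zero C rfl, lam_empty,
          sub_zero]

/-- Equality part of Theorem 1: with cliques `C₁, …, C_k` covering `V`, satisfying the
running intersection property with separators `S_i`, and estimates `Σ̂, Σ̂⁽¹⁾, Σ̂⁽²⁾`
symmetric positive definite with inverses respecting the graphical structure,
`λ(V) = λ(C₁) + ∑_{j=2}^k [λ(C_j) − λ(S_j)]`. -/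
theorem stmt_2 {V : Type*} [Fintype V] [DecidableEq V]
    (k : ℕ) (hk : 0 < k) (C : Fin k → Finset V)
    (hcover : Finset.univ.biUnion C = Finset.univ)
    (Sep : Fin k → Finset V)
    (hSep : ∀ i, Sep i = C i ∩ (Finset.Iio i).biUnion C)
    (hRIP : ∀ i : Fin k, (⟨0, hk⟩ : Fin k) < i → ∃ l < i, Sep i ⊆ C l)
    (n₁ n₂ : ℝ) (hn₁ : 0 < n₁) (hn₂ : 0 < n₂)
    (M M₁ M₂ : Matrix V V ℝ)
    (hMsym : M.IsSymm) (hM₁sym : M₁.IsSymm) (hM₂sym : M₂.IsSymm)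
    (hM : M.PosDef) (hM₁ : M₁.PosDef) (hM₂ : M₂.PosDef)
    (hzM : ∀ v w : V, v ≠ w → (¬ ∃ i, v ∈ C i ∧ w ∈ C i) → M⁻¹ v w = 0)
    (hzM₁ : ∀ v w : V, v ≠ w → (¬ ∃ i, v ∈ C i ∧ w ∈ C i) → M₁⁻¹ v w = 0)
    (hzM₂ : ∀ v w : V, v ≠ w → (¬ ∃ i, v ∈ C i ∧ w ∈ C i) → M₂⁻¹ v w = 0) :
    lam n₁ n₂ M M₁ M₂ Finset.univ =
      lam n₁ n₂ M M₁ M₂ (C ⟨0, hk⟩) +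
        ∑ j ∈ Finset.univ.erase (⟨0, hk⟩ : Fin k),
          (lam n₁ n₂ M M₁ M₂ (C j) - lam n₁ n₂ M M₁ M₂ (Sep j)) :=
  stmt_2_general k hk C hcover Sep hSep hRIP n₁ n₂ M M₁ M₂ hM hM₁ hM₂ hzM hzM₁ hzM₂
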